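/- Let 0 < a < 1 and let b be a natural number with a·b ≥ 1. The Weierstrass function w_{a,b}(x) = ∑_{n=0}^∞ aⁿ cos(bⁿ π x) is nowhere differentiable: for every x ∈ ℝ, w_{a,b} is not differentiable at x. -/

import Mathlib

/-!
Pair `w = weierstrassFun a b` with the Schwartz function `φ = probe` whose Fourier transform is a
bump equal to `1` at `1/2` and supported in `(1/4, 3/4)`. As `𝓕 φ` vanishes near `0`, `φ` has
vanishing moments of order `0` and `1`, so pairing `s ↦ w (x + s / bᵐ)` with `φ` annihilates the
first-order Taylor polynomial of `w` at `x`. For `b ≥ 2` the frequencies `bⁿ / (2 bᵐ)` of the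
rescaled terms stay at distance `≥ 1/4` from `1/2` unless `n = m`, so the pairing has modulus
`|a|ᵐ / 2`. If `w` had a derivative at `x` with remainder `r`, then `bᵐ ∫ r (s / bᵐ) φ s ds` would
tend to `0` by dominated convergence, yet its modulus is `(a b)ᵐ / 2 ≥ 1/2`.
-/

open Real

/-- The Weierstrass function `w_{a,b}(x) = ∑ₙ aⁿ cos(bⁿ π x)`. -/
noncomputable def weierstrassFun (a : ℝ) (b : ℕ) (x : ℝ) : ℝ :=
  ∑' n : ℕ, a ^ n * Real.cos ((b : ℝ) ^ n * π * x)

open MeasureTheory Filter Topology Asymptotics FourierTransform SchwartzMap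

section Fourier

variable {E : Type*} [NormedAddCommGroup E] [NormedSpace ℂ E]

theorem Real.fourier_zero_eq_integral (f : ℝ → E) : 𝓕 f 0 = ∫ x, f x := by
  simp [Real.fourier_real_eq]

theorem Real.integral_smul_eq_zero_of_fourier_eventuallyEq_zero {f : ℝ → E}
    (hf : Integrable f) (hf' : Integrable fun x : ℝ ↦ x • f x) (h : 𝓕 f =ᶠ[𝓝 0] 0) :
    ∫ x : ℝ, x • f x = 0 := by
  have hderiv := (Real.hasDerivAt_fourier hf hf' 0).unique
    ((hasDerivAt_const (0 : ℝ) (0 : E)).congr_of_eventuallyEq h)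
  simp_rw [Real.fourier_zero_eq_integral, mul_smul, integral_smul, Complex.coe_smul] at hderiv
  simpa [Real.pi_ne_zero, Complex.I_ne_zero] using hderiv

theorem Real.integral_cos_smul_eq_fourier {f : ℝ → ℂ} (hf : Integrable f) (θ ν : ℝ) :
    ∫ s, Real.cos (θ + 2 * π * ν * s) • f s =
      (Complex.exp (θ * Complex.I) * 𝓕 f (-ν) + Complex.exp (-θ * Complex.I) * 𝓕 f ν) / 2 := by
  have hexp (w : ℝ) : 𝓕 f w = ∫ s, Complex.exp (↑(-2 * π * s * w) * Complex.I) * f s := by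
    simp [Real.fourier_real_eq_integral_exp_smul]
  have hint (w : ℝ) : Integrable fun s ↦ Complex.exp (↑(-2 * π * s * w) * Complex.I) * f s :=
    hf.bdd_mul (by fun_prop) (.of_forall fun s ↦ (Complex.norm_exp_ofReal_mul_I _).le)
  have hcos (s : ℝ) : Real.cos (θ + 2 * π * ν * s) • f s =
      (Complex.exp (θ * Complex.I) * (Complex.exp (↑(-2 * π * s * -ν) * Complex.I) * f s) +
        Complex.exp (-θ * Complex.I) * (Complex.exp (↑(-2 * π * s * ν) * Complex.I) * f s)) /
        2 := by
    rw [Complex.real_smul, Complex.ofReal_cos, Complex.cos]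
    simp only [← mul_assoc, ← Complex.exp_add]
    push_cast
    ring_nf
  simp_rw [hcos, hexp]
  rw [integral_div, integral_add ((hint _).const_mul _) ((hint _).const_mul _), integral_const_mul,
    integral_const_mul]

end Fourier

theorem integral_tsum_smul_of_norm_le {α ι E : Type*} [MeasurableSpace α] {μ : Measure α}
    [Countable ι] [NormedAddCommGroup E] [NormedSpace ℝ E] {u : ι → α → ℝ} {c : ι → ℝ}
    (hc : Summable c) (hu : ∀ i x, ‖u i x‖ ≤ c i) (hu_meas : ∀ i, AEStronglyMeasurable (u i) μ)
    {g : α → E} (hg : Integrable g μ) :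
    ∫ x, (∑' i, u i x) • g x ∂μ = ∑' i, ∫ x, u i x • g x ∂μ := by
  have hint (i : ι) : Integrable (fun x ↦ u i x • g x) μ :=
    hg.bdd_smul (c i) (hu_meas i) (.of_forall (hu i))
  have hsum : Summable fun i ↦ ∫ x, ‖u i x • g x‖ ∂μ := by
    refine (hc.mul_right (∫ x, ‖g x‖ ∂μ)).of_nonneg_of_le
      (fun i ↦ integral_nonneg fun x ↦ norm_nonneg _) fun i ↦ ?_
    rw [← integral_const_mul]
    refine integral_mono (hint i).norm (hg.norm.const_mul _) fun x ↦ ?_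
    rw [norm_smul]
    exact mul_le_mul_of_nonneg_right (hu i x) (norm_nonneg _)
  rw [integral_tsum_of_summable_integral_norm hint hsum]
  congr 1 with x
  exact ((hc.of_norm_bounded (hu · x)).tsum_smul_const (g x)).symm

theorem HasDerivAt.exists_abs_sub_sub_mul_le_of_abs_le {f : ℝ → ℝ} {L x M : ℝ}
    (hf : HasDerivAt f L x) (hM : ∀ y, |f y| ≤ M) :
    ∃ C, ∀ t, |f (x + t) - f x - t * L| ≤ C * |t| := by
  obtain ⟨δ, hδ, hnear⟩ := Metric.eventually_nhds_iff.1
    ((hasDerivAt_iff_isLittleO_nhds_zero.1 hf).def one_pos)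
  have hM0 : 0 ≤ M := (abs_nonneg _).trans (hM x)
  refine ⟨2 * M / δ + |L| + 1, fun t ↦ ?_⟩
  rcases lt_or_ge |t| δ with ht | ht
  · have := hnear (y := t) (by simpa using ht)
    simp only [smul_eq_mul, norm_eq_abs, one_mul] at this
    nlinarith [abs_nonneg t, abs_nonneg L, div_nonneg (by positivity : 0 ≤ 2 * M) hδ.le]
  · have hfar : 2 * M ≤ 2 * M / δ * |t| := by
      rw [div_mul_eq_mul_div, le_div_iff₀ hδ]
      exact mul_le_mul_of_nonneg_left ht (by positivity)
    calc |f (x + t) - f x - t * L| ≤ |f (x + t)| + |f x| + |t| * |L| := by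
          rw [← abs_mul]; exact (abs_sub _ _).trans (add_le_add_left (abs_sub _ _) _)
      _ ≤ 2 * M / δ * |t| + |L| * |t| + |t| := by
          nlinarith [hM (x + t), hM x, abs_nonneg t]
      _ = (2 * M / δ + |L| + 1) * |t| := by ring

theorem tendsto_integral_mul_comp_div_smul {E : Type*} [NormedAddCommGroup E] [NormedSpace ℝ E]
    {r : ℝ → ℝ} {C : ℝ} (hr : r =o[𝓝 0] fun t ↦ t) (hrC : ∀ t, |r t| ≤ C * |t|)
    (hr_meas : Measurable r) {g : ℝ → E} (hg : AEStronglyMeasurable g)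
    (hg' : Integrable fun s ↦ s • g s) :
    Tendsto (fun k : ℝ ↦ ∫ s, (k * r (s / k)) • g s) atTop (𝓝 0) := by
  rw [← integral_zero ℝ E]
  refine tendsto_integral_filter_of_dominated_convergence (fun s ↦ C * ‖s • g s‖)
    (.of_forall fun k ↦ ((measurable_const.mul (hr_meas.comp
      (measurable_id.div_const k))).aestronglyMeasurable.smul hg))
    ?_ (hg'.norm.const_mul C) (.of_forall fun s ↦ ?_)
  · filter_upwards [eventually_gt_atTop 0] with k hk
    refine .of_forall fun s ↦ ?_
    have := hrC (s / k)
    rw [abs_div, abs_of_pos hk] at this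
    rw [norm_smul, norm_smul, norm_mul, norm_eq_abs, norm_eq_abs, norm_eq_abs, abs_of_pos hk,
      ← mul_assoc]
    refine mul_le_mul_of_nonneg_right ?_ (norm_nonneg _)
    calc k * |r (s / k)| ≤ k * (C * (|s| / k)) := mul_le_mul_of_nonneg_left this hk.le
      _ = C * |s| := by field_simp
  · have hs : Tendsto (fun k : ℝ ↦ s / k) atTop (𝓝 0) := tendsto_const_nhds.div_atTop tendsto_id
    have hbdd : (fun k : ℝ ↦ k * (s / k)) =O[atTop] fun _ ↦ (1 : ℝ) :=
      IsBigO.of_bound |s| (by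
        filter_upwards [eventually_ne_atTop 0] with k hk
        simp [mul_div_cancel₀ _ hk])
    have := (isLittleO_one_iff ℝ).1 (((isBigO_refl id atTop).mul_isLittleO
      (hr.comp_tendsto hs)).trans_isBigO hbdd)
    simpa using this.smul_const (g s)

theorem integral_mul_sub_sub_mul_smul_eq {E : Type*} [NormedAddCommGroup E] [NormedSpace ℝ E]
    {f : ℝ → ℝ} {g : ℝ → E} {M : ℝ} (hf : Continuous f) (hM : ∀ y, |f y| ≤ M) (x L : ℝ) {k : ℝ}
    (hk : k ≠ 0) (hg : Integrable g)
    (hg' : Integrable fun s ↦ s • g s) (h₀ : ∫ s, g s = 0) (h₁ : ∫ s, s • g s = 0) :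
    ∫ s, (k * (f (x + s / k) - f x - s / k * L)) • g s = k • ∫ s, f (x + s / k) • g s := by
  have hfg : Integrable fun s ↦ f (x + s / k) • g s :=
    hg.bdd_smul M (by fun_prop) (.of_forall fun s ↦ hM _)
  have hsplit (s : ℝ) : (k * (f (x + s / k) - f x - s / k * L)) • g s =
      k • f (x + s / k) • g s - (k * f x) • g s - L • s • g s := by
    rw [smul_smul, smul_smul, ← sub_smul, ← sub_smul]
    congr 1
    field_simp
  simp_rw [hsplit]
  rw [integral_sub, integral_sub, integral_smul, integral_smul, integral_smul, h₀, h₁, smul_zero,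
    smul_zero, sub_zero, sub_zero]
  all_goals fun_prop

theorem le_abs_pow_div_pow_sub_one {B : ℝ} (hB : 2 ≤ B) {n m : ℕ} (hnm : n ≠ m) :
    1 / 2 ≤ |B ^ n / B ^ m - 1| := by
  have hpow {i j : ℕ} (hij : i < j) : 2 * B ^ i ≤ B ^ j :=
    calc 2 * B ^ i ≤ B * B ^ i := by gcongr
      _ = B ^ (i + 1) := by ring
      _ ≤ B ^ j := pow_le_pow_right₀ (by linarith) hij
  have hBm : 0 < B ^ m := by positivity
  rcases hnm.lt_or_gt with h | h
  · have : B ^ n / B ^ m ≤ 1 / 2 := by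
      rw [div_le_iff₀ hBm]; linarith [hpow h]
    rw [abs_sub_comm]; exact le_abs.2 (.inl (by linarith))
  · have : 2 ≤ B ^ n / B ^ m := by
      rw [le_div_iff₀ hBm]; exact hpow h
    exact le_abs.2 (.inl (by linarith))

section WeierstrassFun

variable (a : ℝ) (b : ℕ)

theorem norm_weierstrassTerm_le (n : ℕ) (x : ℝ) :
    ‖a ^ n * Real.cos ((b : ℝ) ^ n * π * x)‖ ≤ |a| ^ n := by
  rw [norm_mul, norm_pow, norm_eq_abs]
  exact mul_le_of_le_one_right (by positivity) (abs_cos_le_one _)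

variable {a}

theorem abs_weierstrassFun_le (ha : |a| < 1) (x : ℝ) : |weierstrassFun a b x| ≤ (1 - |a|)⁻¹ := by
  rw [← tsum_geometric_of_lt_one (abs_nonneg a) ha, ← norm_eq_abs]
  exact tsum_of_norm_bounded (summable_geometric_of_lt_one (abs_nonneg a) ha).hasSum
    (norm_weierstrassTerm_le a b · x)

theorem continuous_weierstrassFun (ha : |a| < 1) : Continuous (weierstrassFun a b) :=
  continuous_tsum (fun n ↦ by fun_prop) (summable_geometric_of_lt_one (abs_nonneg a) ha)
    (norm_weierstrassTerm_le a b)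

end WeierstrassFun

namespace Weierstrass

noncomputable def halfFrequencyBump : ContDiffBump (1 / 2 : ℝ) :=
  ⟨1 / 8, 1 / 4, by norm_num, by norm_num⟩

noncomputable def probe : 𝓢(ℝ, ℂ) :=
  𝓕⁻ (HasCompactSupport.toSchwartzMap (f := fun ξ ↦ (halfFrequencyBump ξ : ℂ))
    (halfFrequencyBump.hasCompactSupport.comp_left Complex.ofReal_zero)
    (Complex.ofRealCLM.contDiff.comp halfFrequencyBump.contDiff))

theorem fourier_probe : 𝓕 (⇑probe) = fun ξ ↦ (halfFrequencyBump ξ : ℂ) := by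
  rw [← SchwartzMap.fourier_coe, probe, fourier_fourierInv_eq]
  rfl

theorem fourier_probe_half : 𝓕 (⇑probe) (1 / 2) = 1 := by
  rw [congrFun fourier_probe, halfFrequencyBump.one_of_mem_closedBall (by simp [halfFrequencyBump]),
    Complex.ofReal_one]

theorem fourier_probe_eq_zero {ξ : ℝ} (hξ : 1 / 4 ≤ |ξ - 1 / 2|) : 𝓕 (⇑probe) ξ = 0 := by
  rw [congrFun fourier_probe,
    halfFrequencyBump.zero_of_le_dist (by simpa [halfFrequencyBump, dist_eq] using hξ),
    Complex.ofReal_zero]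

theorem fourier_probe_eventuallyEq_zero : 𝓕 (⇑probe) =ᶠ[𝓝 0] 0 := by
  filter_upwards [Metric.ball_mem_nhds (0 : ℝ) (by norm_num : (0 : ℝ) < 1 / 4)] with ξ hξ
  rw [Metric.mem_ball, dist_zero_right, norm_eq_abs] at hξ
  exact fourier_probe_eq_zero (le_abs.2 (.inr (by linarith [le_abs_self ξ])))

theorem integrable_smul_probe : Integrable fun s : ℝ ↦ s • probe s := by
  refine (probe.integrable_pow_mul volume 1).mono' (by fun_prop) (.of_forall fun s ↦ ?_)
  simp

theorem integral_probe_eq_zero : ∫ s, probe s = 0 := by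
  rw [← Real.fourier_zero_eq_integral, fourier_probe_eventuallyEq_zero.self_of_nhds, Pi.zero_apply]

theorem integral_smul_probe_eq_zero : ∫ s : ℝ, s • probe s = 0 :=
  Real.integral_smul_eq_zero_of_fourier_eventuallyEq_zero probe.integrable integrable_smul_probe
    fourier_probe_eventuallyEq_zero

theorem integral_weierstrassTerm_smul_probe (a : ℝ) {b : ℕ} (hb : 2 ≤ b) (x : ℝ) (n m : ℕ) :
    ∫ s, (a ^ n * Real.cos ((b : ℝ) ^ n * π * (x + s / (b : ℝ) ^ m))) • probe s =
      if n = m then a ^ m • (Complex.exp (-((b : ℝ) ^ m * π * x : ℝ) * Complex.I) / 2) else 0 := by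
  have hB : (2 : ℝ) ≤ b := by exact_mod_cast hb
  set ν : ℝ := (b : ℝ) ^ n / (2 * (b : ℝ) ^ m)
  have hν : 0 ≤ ν := by positivity
  have hphase (s : ℝ) : (b : ℝ) ^ n * π * (x + s / (b : ℝ) ^ m) =
      (b : ℝ) ^ n * π * x + 2 * π * ν * s := by
    simp only [ν]
    field_simp
  simp_rw [hphase, mul_smul, integral_smul, Real.integral_cos_smul_eq_fourier probe.integrable,
    fourier_probe_eq_zero (ξ := -ν) (by rw [abs_of_neg (by linarith)]; linarith)]
  split_ifs with hnm
  · subst hnm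
    have : ν = 1 / 2 := by simp only [ν]; field_simp
    rw [this, fourier_probe_half, mul_zero, zero_add, mul_one]
  · rw [fourier_probe_eq_zero]
    · simp
    · have hν' : ν - 1 / 2 = ((b : ℝ) ^ n / (b : ℝ) ^ m - 1) / 2 := by
        simp only [ν]
        field_simp
      rw [hν', abs_div, abs_two]
      linarith [le_abs_pow_div_pow_sub_one hB hnm]

theorem integral_weierstrassFun_smul_probe {a : ℝ} {b : ℕ} (ha : |a| < 1) (hb : 2 ≤ b) (x : ℝ)
    (m : ℕ) : ∫ s, weierstrassFun a b (x + s / (b : ℝ) ^ m) • probe s =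
      a ^ m • (Complex.exp (-((b : ℝ) ^ m * π * x : ℝ) * Complex.I) / 2) := by
  simp only [weierstrassFun]
  rw [integral_tsum_smul_of_norm_le (summable_geometric_of_lt_one (abs_nonneg a) ha)
    (fun n s ↦ norm_weierstrassTerm_le a b n _) (fun n ↦ by fun_prop) probe.integrable]
  simp_rw [integral_weierstrassTerm_smul_probe a hb]
  exact tsum_ite_eq m _

theorem norm_integral_weierstrassFun_smul_probe {a : ℝ} {b : ℕ} (ha : |a| < 1) (hb : 2 ≤ b)
    (x : ℝ) (m : ℕ) : ‖∫ s, weierstrassFun a b (x + s / (b : ℝ) ^ m) • probe s‖ = |a| ^ m / 2 := by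
  rw [integral_weierstrassFun_smul_probe ha hb, norm_smul, norm_div, ← Complex.ofReal_neg,
    Complex.norm_exp_ofReal_mul_I, norm_pow, norm_eq_abs, Complex.norm_ofNat, mul_one_div]

end Weierstrass

open Weierstrass

theorem weierstrassFun_nowhere_differentiable
    (a : ℝ) (b : ℕ) (ha0 : 0 < a) (ha1 : a < 1) (hab : 1 ≤ a * b) (x : ℝ) :
    ¬ DifferentiableAt ℝ (weierstrassFun a b) x := by
  intro hf
  have ha : |a| < 1 := by rwa [abs_of_pos ha0]
  have hb : 2 ≤ b := by
    have : (1 : ℝ) < b := by nlinarith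
    exact_mod_cast this
  have hfc := continuous_weierstrassFun b ha
  have hM := abs_weierstrassFun_le b ha
  set f := weierstrassFun a b
  obtain ⟨L, hL⟩ : ∃ L, HasDerivAt f L x := ⟨_, hf.hasDerivAt⟩
  obtain ⟨C, hC⟩ := hL.exists_abs_sub_sub_mul_le_of_abs_le hM
  have hlim := tendsto_integral_mul_comp_div_smul (r := fun t ↦ f (x + t) - f x - t * L)
    (by simpa only [smul_eq_mul] using hasDerivAt_iff_isLittleO_nhds_zero.1 hL) hC
    (by fun_prop) probe.continuous.aestronglyMeasurable integrable_smul_probe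
  have hbm : Tendsto (fun m : ℕ ↦ (b : ℝ) ^ m) atTop atTop :=
    tendsto_pow_atTop_atTop_of_one_lt (by exact_mod_cast hb)
  obtain ⟨m, hm⟩ := ((hlim.comp hbm).norm.eventually_lt_const
    (by norm_num : ‖(0 : ℂ)‖ < 1 / 2)).exists
  rw [Function.comp_apply, integral_mul_sub_sub_mul_smul_eq hfc hM x L
    (pow_ne_zero m (by norm_cast; omega)) probe.integrable integrable_smul_probe
    integral_probe_eq_zero integral_smul_probe_eq_zero] at hm
  rw [norm_smul, norm_integral_weierstrassFun_smul_probe ha hb, norm_pow, Real.norm_natCast,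
    abs_of_pos ha0, ← mul_div_assoc, ← mul_pow, mul_comm (b : ℝ)] at hm
  linarith [one_le_pow₀ (n := m) hab]
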